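/- arXiv:1503.01270 — 2 statements merged into one kernel-verified Lean document; each statement's English description precedes it below -/
import Mathlib

section
/- Let μ̄ be a shift-invariant probability measure on the two-sided shift Σ^± = {1,…,m}^ℤ satisfying the quasi-Bernoulli property: there exists C > 0 such that C⁻¹ μ̄[a_{−n}⋯a_k] ≤ μ̄[a_{−n}⋯a₀]·μ̄[a₁⋯a_k] ≤ C μ̄[a_{−n}⋯a_k] for all cylinders. Define μ̃ on cylinders by μ̃[a_{−n}⋯a_k] = μ̄[a_{−n}⋯a₀]·μ̄[a₁⋯a_k]. Then μ̃ extends to a Borel measure on Σ^± that is equivalent (mutually absolutely continuous) to μ̄. -/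
open MeasureTheory
open scoped ENNReal

/-- The left shift on the two-sided shift space `{1,…,m}^ℤ`. -/
def shiftZ {m : ℕ} (x : ℤ → Fin m) : ℤ → Fin m := fun i => x (i + 1)

/-- The cylinder of sequences agreeing with `w` on coordinates `j` through `l`. -/
def cylZ {m : ℕ} (j l : ℤ) (w : ℤ → Fin m) : Set (ℤ → Fin m) :=
  {x | ∀ i : ℤ, j ≤ i → i ≤ l → x i = w i}

/-!
The measure `μ̃` is the image of `μ ⊗ μ` under the map splicing the past (coordinates `≤ 0`) of
one sequence to the future of another, so it has the required values on cylinders. The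
quasi-Bernoulli bounds on the symmetric cylinders `[-n, n]` read `μ̃ ≤ C μ` and `μ ≤ C μ̃`. Every
open set is an increasing union of unions of such cylinders, so these bounds pass to open sets,
and by outer regularity to all Borel sets; hence the two measures are equivalent.
-/

open Set

theorem MeasureTheory.Measure.le_of_forall_isOpen_le {α : Type*} [TopologicalSpace α]
    [MeasurableSpace α] {μ ν : Measure α} [ν.OuterRegular]
    (h : ∀ U, IsOpen U → μ U ≤ ν U) : μ ≤ ν := by
  refine Measure.le_iff'.2 fun s => ?_
  rw [s.measure_eq_iInf_isOpen ν]
  exact le_iInf₂ fun U hsU => le_iInf fun hU => (measure_mono hsU).trans (h U hU)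

namespace ShiftSpace

variable {m : ℕ}

lemma measurableSet_cylZ (j l : ℤ) (w : ℤ → Fin m) : MeasurableSet (cylZ j l w) := by
  have : cylZ j l w = ⋂ i ∈ Finset.Icc j l, (fun x : ℤ → Fin m => x i) ⁻¹' {w i} := by
    ext x; simp [cylZ]
  rw [this]
  exact .biInter (Finset.countable_toSet _) fun i _ => measurable_pi_apply i (.singleton _)

def window (n : ℕ) (x : ℤ → Fin m) : Finset.Icc (-(n : ℤ)) n → Fin m := fun i => x i

lemma measurable_window (n : ℕ) : Measurable (window (m := m) n) :=
  measurable_pi_lambda _ fun i => measurable_pi_apply (i : ℤ)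

lemma window_preimage_singleton (n : ℕ) (x : ℤ → Fin m) :
    window n ⁻¹' {window n x} = cylZ (-(n : ℤ)) n x := by
  ext y
  simp [window, cylZ, funext_iff]

lemma cylZ_antitone {n n' : ℕ} (h : n ≤ n') (x : ℤ → Fin m) :
    cylZ (-(n' : ℤ)) n' x ⊆ cylZ (-(n : ℤ)) n x :=
  fun y hy i h1 h2 => hy i (by omega) (by omega)

lemma exists_cylZ_subset {U : Set (ℤ → Fin m)} (hU : IsOpen U) {x : ℤ → Fin m} (hx : x ∈ U) :
    ∃ n : ℕ, cylZ (-(n : ℤ)) n x ⊆ U := by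
  obtain ⟨I, u, hIu, hsub⟩ := isOpen_pi_iff.1 hU x hx
  refine ⟨I.sup Int.natAbs, fun y hy => hsub fun i hi => ?_⟩
  have := Finset.le_sup (f := Int.natAbs) hi
  rw [hy i (by omega) (by omega)]
  exact (hIu i hi).2

lemma measure_window_preimage_le {ν ρ : Measure (ℤ → Fin m)} {n : ℕ}
    (h : ∀ x, ν (cylZ (-(n : ℤ)) n x) ≤ ρ (cylZ (-(n : ℤ)) n x))
    (A : Set (Finset.Icc (-(n : ℤ)) n → Fin m)) :
    ν (window n ⁻¹' A) ≤ ρ (window n ⁻¹' A) := by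
  classical
  have hfib : ∀ a : Finset.Icc (-(n : ℤ)) n → Fin m, MeasurableSet (window n ⁻¹' {a}) :=
    fun a => measurable_window n (.singleton a)
  rw [← A.coe_toFinset, ← sum_measure_preimage_singleton _ fun a _ => hfib a,
    ← sum_measure_preimage_singleton _ fun a _ => hfib a]
  refine Finset.sum_le_sum fun a _ => ?_
  rcases (window n ⁻¹' {a}).eq_empty_or_nonempty with hempty | ⟨x, rfl⟩
  · simp [hempty]
  · rw [window_preimage_singleton]
    exact h x

lemma measure_isOpen_le_of_cylZ_le {ν ρ : Measure (ℤ → Fin m)}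
    (h : ∀ (n : ℕ) x, ν (cylZ (-(n : ℤ)) n x) ≤ ρ (cylZ (-(n : ℤ)) n x))
    {U : Set (ℤ → Fin m)} (hU : IsOpen U) : ν U ≤ ρ U := by
  set V : ℕ → Set (ℤ → Fin m) := fun n => window n ⁻¹' {a | window n ⁻¹' {a} ⊆ U}
  have hV : ∀ n x, x ∈ V n ↔ cylZ (-(n : ℤ)) n x ⊆ U := fun n x => by
    simp only [V, mem_preimage, mem_ofPred_eq, window_preimage_singleton]
  have hVU : ⋃ n, V n = U := by
    ext x
    simp only [mem_iUnion, hV]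
    exact ⟨fun ⟨n, hn⟩ => hn fun _ _ _ => rfl, exists_cylZ_subset hU⟩
  have hmono : Monotone V := fun n n' hnn' x hx =>
    (hV n' x).2 ((cylZ_antitone hnn' x).trans ((hV n x).1 hx))
  rw [← hVU, hmono.measure_iUnion, hmono.measure_iUnion]
  exact iSup_mono fun n => measure_window_preimage_le (h n) _


lemma le_smul_of_cylZ_le {ν ρ : Measure (ℤ → Fin m)} [IsFiniteMeasure ρ] {C : ℝ≥0∞}
    (hC : C ≠ ∞) (h : ∀ (n : ℕ) x, ν (cylZ (-(n : ℤ)) n x) ≤ C * ρ (cylZ (-(n : ℤ)) n x)) :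
    ν ≤ C • ρ :=
  haveI := Measure.OuterRegular.smul ρ hC
  Measure.le_of_forall_isOpen_le fun _ hU => measure_isOpen_le_of_cylZ_le h hU

def spliceAtZero (p : (ℤ → Fin m) × (ℤ → Fin m)) : ℤ → Fin m :=
  fun i => if i ≤ 0 then p.1 i else p.2 i

lemma measurable_spliceAtZero : Measurable (spliceAtZero (m := m)) :=
  measurable_pi_lambda _ fun i => by
    by_cases hi : i ≤ 0
    · simpa [spliceAtZero, hi] using measurable_fst.eval
    · simpa [spliceAtZero, hi] using measurable_snd.eval

lemma spliceAtZero_preimage_cylZ {j l : ℤ} (hj : j ≤ 1) (hl : 0 ≤ l) (w : ℤ → Fin m) :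
    spliceAtZero ⁻¹' cylZ j l w = cylZ j 0 w ×ˢ cylZ 1 l w := by
  ext ⟨y, z⟩
  simp only [mem_preimage, mem_prod, cylZ, mem_ofPred_eq, spliceAtZero]
  constructor
  · intro h
    refine ⟨fun i h1 h2 => ?_, fun i h1 h2 => ?_⟩
    · simpa [h2] using h i h1 (by omega)
    · simpa [show ¬ i ≤ 0 by omega] using h i (by omega) h2
  · rintro ⟨hy, hz⟩ i h1 h2
    by_cases h0 : i ≤ 0
    · simpa [h0] using hy i h1 h0
    · simpa [h0] using hz i (by omega) h2

noncomputable def pastFutureProduct (μ : Measure (ℤ → Fin m)) [SFinite μ] :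
    Measure (ℤ → Fin m) :=
  (μ.prod μ).map spliceAtZero

lemma pastFutureProduct_cylZ (μ : Measure (ℤ → Fin m)) [SFinite μ] {j l : ℤ} (hj : j ≤ 1)
    (hl : 0 ≤ l) (w : ℤ → Fin m) :
    pastFutureProduct μ (cylZ j l w) = μ (cylZ j 0 w) * μ (cylZ 1 l w) := by
  rw [pastFutureProduct, Measure.map_apply measurable_spliceAtZero (measurableSet_cylZ _ _ _),
    spliceAtZero_preimage_cylZ hj hl, Measure.prod_prod]

instance (μ : Measure (ℤ → Fin m)) [IsFiniteMeasure μ] :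
    IsFiniteMeasure (pastFutureProduct μ) := by
  unfold pastFutureProduct; infer_instance

end ShiftSpace

theorem stmt6_general {m : ℕ} (μ : Measure (ℤ → Fin m)) [IsProbabilityMeasure μ]
    (C : ℝ≥0∞) (hC0 : 0 < C) (hCtop : C ≠ ⊤)
    (hqb : ∀ (n k : ℕ) (w : ℤ → Fin m),
      C⁻¹ * μ (cylZ (-(n : ℤ)) k w) ≤ μ (cylZ (-(n : ℤ)) 0 w) * μ (cylZ 1 k w) ∧
      μ (cylZ (-(n : ℤ)) 0 w) * μ (cylZ 1 k w) ≤ C * μ (cylZ (-(n : ℤ)) k w)) :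
    ∃ μt : Measure (ℤ → Fin m),
      (∀ (n k : ℕ) (w : ℤ → Fin m),
        μt (cylZ (-(n : ℤ)) k w) = μ (cylZ (-(n : ℤ)) 0 w) * μ (cylZ 1 k w)) ∧
      μt ≪ μ ∧ μ ≪ μt := by
  have hcyl : ∀ (n k : ℕ) (w : ℤ → Fin m),
      ShiftSpace.pastFutureProduct μ (cylZ (-(n : ℤ)) k w) =
        μ (cylZ (-(n : ℤ)) 0 w) * μ (cylZ 1 k w) := fun n k w =>
    ShiftSpace.pastFutureProduct_cylZ μ (by omega) (by omega) w
  refine ⟨ShiftSpace.pastFutureProduct μ, hcyl, ?_, ?_⟩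
  · refine Measure.absolutelyContinuous_of_le_smul
      (ShiftSpace.le_smul_of_cylZ_le hCtop fun n x => ?_)
    exact (hcyl n n x).trans_le (hqb n n x).2
  · refine Measure.absolutelyContinuous_of_le_smul
      (ShiftSpace.le_smul_of_cylZ_le hCtop fun n x => ?_)
    rw [← ENNReal.inv_mul_le_iff hC0.ne' hCtop, hcyl]
    exact (hqb n n x).1

/-- If `μ̄` is a shift-invariant quasi-Bernoulli probability measure on `{1,…,m}^ℤ`
(with constant `C`), then the assignment
`μ̃[a_{-n}⋯a_k] = μ̄[a_{-n}⋯a₀] ⬝ μ̄[a₁⋯a_k]` on cylinders extends to a Borel measure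
on `{1,…,m}^ℤ` that is mutually absolutely continuous with `μ̄`. -/
theorem stmt6 {m : ℕ} (μ : Measure (ℤ → Fin m)) [IsProbabilityMeasure μ]
    (hinv : MeasurePreserving (shiftZ (m := m)) μ μ)
    (C : ℝ≥0∞) (hC0 : 0 < C) (hCtop : C ≠ ⊤)
    (hqb : ∀ (n k : ℕ) (w : ℤ → Fin m),
      C⁻¹ * μ (cylZ (-(n : ℤ)) k w) ≤ μ (cylZ (-(n : ℤ)) 0 w) * μ (cylZ 1 k w) ∧
      μ (cylZ (-(n : ℤ)) 0 w) * μ (cylZ 1 k w) ≤ C * μ (cylZ (-(n : ℤ)) k w)) :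
    ∃ μt : Measure (ℤ → Fin m),
      (∀ (n k : ℕ) (w : ℤ → Fin m),
        μt (cylZ (-(n : ℤ)) k w) = μ (cylZ (-(n : ℤ)) 0 w) * μ (cylZ 1 k w)) ∧
      μt ≪ μ ∧ μ ≪ μt :=
  stmt6_general μ C hC0 hCtop hqb
end

section
/- Let (X, ν, T) be an ergodic measure-preserving system, let d : X × ℕ → ℝ be measurable, and suppose there exist sets G_{κ,ε} ⊆ X for κ, ε > 0 with ν(G_{κ,ε}) → 1 as κ → 0 (for each fixed ε), and a function r : X × ℕ → (0,∞) with r(x,n) → 0 as n → ∞ for each x, such that whenever r(x,n) < κ and Tⁿx ∈ G_{κ,ε} one has |d(x,n) − 1| < ε. Then for ν-almost every x and every ε > 0, the set G(x,ε) := {n ∈ ℕ : |d(x,n) − 1| < ε} has natural density 1. -/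
/-!
For a bounded measurable `g`, Hopf's maximal ergodic lemma shows that on an invariant set where
the Birkhoff averages of `g` dip below `t` infinitely often one has `∫ g ≤ t`; since the lower
limit of the averages is invariant, ergodicity makes it at least `∫ g` almost everywhere. Applied
to `g = 1_{G_{κ,ε}}`, almost every orbit visits `G_{κ,ε}` with lower frequency at least
`ν(G_{κ,ε})`, and once `r(x,n) < κ` every such visit is a time with `|d(x,n) - 1| < ε`. Letting
`ν(G_{κ,ε}) → 1` along countably many `κ` and `ε` gives density one.
-/

open MeasureTheory Filter Topology

section Maximal

variable {X : Type*} {T : X → X} {f : X → ℝ}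

/-- `maxBirkhoffSum T f N x = max (0, S₁ x, …, S_N x)` with `Sₙ = birkhoffSum T f n`. -/
noncomputable def maxBirkhoffSum (T : X → X) (f : X → ℝ) : ℕ → X → ℝ
  | 0 => 0
  | N + 1 => fun x => max 0 (f x + maxBirkhoffSum T f N (T x))

lemma maxBirkhoffSum_nonneg : ∀ N x, 0 ≤ maxBirkhoffSum T f N x
  | 0, _ => le_rfl
  | _ + 1, _ => le_max_left _ _

lemma maxBirkhoffSum_mono_succ : ∀ N x, maxBirkhoffSum T f N x ≤ maxBirkhoffSum T f (N + 1) x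
  | 0, x => maxBirkhoffSum_nonneg 1 x
  | N + 1, x => max_le_max le_rfl (by gcongr; exact maxBirkhoffSum_mono_succ N (T x))

lemma monotone_maxBirkhoffSum (x : X) : Monotone (maxBirkhoffSum T f · x) :=
  monotone_nat_of_le_succ fun N => maxBirkhoffSum_mono_succ N x

lemma birkhoffSum_le_maxBirkhoffSum :
    ∀ N, ∀ n ≤ N, ∀ x, birkhoffSum T f n x ≤ maxBirkhoffSum T f N x
  | _, 0, _, x => by simpa using maxBirkhoffSum_nonneg _ x
  | N + 1, n + 1, hn, x => by
    rw [birkhoffSum_succ']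
    exact le_max_of_le_right
      (by gcongr; exact birkhoffSum_le_maxBirkhoffSum N n (by omega) (T x))

lemma maxBirkhoffSum_le_add_comp {N : ℕ} {x : X} (hx : 0 < maxBirkhoffSum T f N x) :
    maxBirkhoffSum T f N x ≤ f x + maxBirkhoffSum T f N (T x) := by
  cases N with
  | zero => exact absurd hx (lt_irrefl 0)
  | succ N =>
    have hpos : 0 < f x + maxBirkhoffSum T f N (T x) := by
      by_contra! h
      exact hx.ne' (max_eq_left h)
    calc maxBirkhoffSum T f (N + 1) x = f x + maxBirkhoffSum T f N (T x) := max_eq_right hpos.le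
      _ ≤ _ := by gcongr; exact maxBirkhoffSum_mono_succ N (T x)

variable [MeasurableSpace X] {μ : Measure X}

lemma measurable_maxBirkhoffSum (hT : Measurable T) (hf : Measurable f) :
    ∀ N, Measurable (maxBirkhoffSum T f N)
  | 0 => measurable_const
  | N + 1 => measurable_const.max (hf.add ((measurable_maxBirkhoffSum hT hf N).comp hT))

lemma integrable_maxBirkhoffSum (hT : MeasurePreserving T μ μ) (hfm : Measurable f)
    (hf : Integrable f μ) : ∀ N, Integrable (maxBirkhoffSum T f N) μ
  | 0 => integrable_zero X ℝ μ
  | N + 1 => by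
    have hcomp := hT.integrable_comp_of_integrable (integrable_maxBirkhoffSum hT hfm hf N)
    simpa [maxBirkhoffSum, max_comm] using (hf.add hcomp).pos_part

/-- Hopf's maximal ergodic lemma. -/
theorem setIntegral_maxBirkhoffSum_pos_nonneg (hT : MeasurePreserving T μ μ)
    (hfm : Measurable f) (hf : Integrable f μ) (N : ℕ) :
    0 ≤ ∫ x in {x | 0 < maxBirkhoffSum T f N x}, f x ∂μ := by
  set M := maxBirkhoffSum T f N
  set E := {x | 0 < M x}
  have hMm : Measurable M := measurable_maxBirkhoffSum hT.measurable hfm N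
  have hM : Integrable M μ := integrable_maxBirkhoffSum hT hfm hf N
  have hMT : Integrable (M ∘ T) μ := hT.integrable_comp_of_integrable hM
  have hE : MeasurableSet E := measurableSet_lt measurable_const hMm
  have hMT_eq : ∫ x, M (T x) ∂μ = ∫ x, M x ∂μ := by
    rw [← integral_map hT.aemeasurable hMm.aestronglyMeasurable, hT.map_eq]
  have hME_eq : ∫ x in E, M x ∂μ = ∫ x, M x ∂μ :=
    setIntegral_eq_integral_of_forall_compl_eq_zero fun x hx =>
      le_antisymm (not_lt.mp hx) (maxBirkhoffSum_nonneg N x)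
  calc 0 = ∫ x in E, M x ∂μ - ∫ x, M (T x) ∂μ := by rw [hME_eq, hMT_eq, sub_self]
    _ ≤ ∫ x in E, M x ∂μ - ∫ x in E, M (T x) ∂μ :=
      sub_le_sub_left (setIntegral_le_integral hMT
        (Eventually.of_forall fun x => maxBirkhoffSum_nonneg N _)) _
    _ = ∫ x in E, (M x - M (T x)) ∂μ := (integral_sub hM.integrableOn hMT.integrableOn).symm
    _ ≤ ∫ x in E, f x ∂μ := setIntegral_mono_on (hM.sub hMT).integrableOn hf.integrableOn hE
        fun x hx => by linarith [maxBirkhoffSum_le_add_comp (T := T) (f := f) hx]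

theorem integral_nonneg_of_ae_exists_birkhoffSum_pos (hT : MeasurePreserving T μ μ)
    (hfm : Measurable f) (hf : Integrable f μ)
    (h : ∀ᵐ x ∂μ, ∃ n, 0 < birkhoffSum T f n x) : 0 ≤ ∫ x, f x ∂μ := by
  set E : ℕ → Set X := fun N => {x | 0 < maxBirkhoffSum T f N x}
  have hEm : ∀ N, MeasurableSet (E N) := fun N =>
    measurableSet_lt measurable_const (measurable_maxBirkhoffSum hT.measurable hfm N)
  have hE_mono : Monotone E := fun _ _ hNM x hx =>
    lt_of_lt_of_le hx (monotone_maxBirkhoffSum x hNM)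
  have hE_ae : (⋃ N, E N) =ᵐ[μ] (Set.univ : Set X) := by
    refine ae_eq_univ.mpr (measure_mono_null ?_ (ae_iff.mp h))
    intro x hx
    simp only [Set.mem_compl_iff, Set.mem_iUnion, not_exists, E, Set.mem_ofPred_eq, not_lt] at hx
    simpa using fun n => (birkhoffSum_le_maxBirkhoffSum n n le_rfl x).trans (hx n)
  have hlim := tendsto_setIntegral_of_monotone hEm hE_mono hf.integrableOn
  rw [setIntegral_congr_set hE_ae, setIntegral_univ] at hlim
  exact ge_of_tendsto hlim
    (Eventually.of_forall (setIntegral_maxBirkhoffSum_pos_nonneg hT hfm hf))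

end Maximal

lemma Filter.liminf_eq_of_tendsto_sub_zero {ι : Type*} {l : Filter ι} [l.NeBot] {u v : ι → ℝ}
    {C : ℝ} (hu : ∀ i, |u i| ≤ C) (h : Tendsto (v - u) l (𝓝 0)) :
    liminf v l = liminf u l := by
  have hu_le : IsBoundedUnder (· ≤ ·) l u :=
    isBoundedUnder_of ⟨C, fun i => (abs_le.mp (hu i)).2⟩
  have hu_ge : IsBoundedUnder (· ≥ ·) l u :=
    isBoundedUnder_of ⟨-C, fun i => (abs_le.mp (hu i)).1⟩
  have hv : v = (v - u) + u := by simp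
  apply le_antisymm
  · calc liminf v l = liminf ((v - u) + u) l := by rw [← hv]
      _ ≤ limsup (v - u) l + liminf u l :=
        liminf_add_le h.isBoundedUnder_ge h.isBoundedUnder_le hu_ge hu_le.isCoboundedUnder_ge
      _ = liminf u l := by rw [h.limsup_eq, zero_add]
  · calc liminf u l = liminf (v - u) l + liminf u l := by rw [h.liminf_eq, zero_add]
      _ ≤ liminf ((v - u) + u) l :=
        le_liminf_add h.isBoundedUnder_ge h.isBoundedUnder_le hu_ge hu_le.isCoboundedUnder_ge
      _ = liminf v l := by rw [← hv]

section BirkhoffAverage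

variable {X : Type*} {T : X → X} {g : X → ℝ} {C : ℝ}

lemma abs_birkhoffAverage_le (hC : ∀ x, |g x| ≤ C) (n : ℕ) (x : X) :
    |birkhoffAverage ℝ T g n x| ≤ C := by
  rcases Nat.eq_zero_or_pos n with rfl | hn
  · simpa using (abs_nonneg _).trans (hC x)
  have hsum : |birkhoffSum T g n x| ≤ n * C := by
    calc |birkhoffSum T g n x| ≤ ∑ k ∈ Finset.range n, |g (T^[k] x)| :=
          Finset.abs_sum_le_sum_abs _ _
      _ ≤ ∑ k ∈ Finset.range n, C := Finset.sum_le_sum fun k _ => hC _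
      _ = n * C := by simp
  rw [birkhoffAverage, smul_eq_mul, abs_mul, abs_inv, Nat.abs_cast,
    inv_mul_le_iff₀ (by exact_mod_cast hn)]
  exact hsum

lemma liminf_birkhoffAverage_apply (hC : ∀ x, |g x| ≤ C) (x : X) :
    liminf (fun n => birkhoffAverage ℝ T g n (T x)) atTop =
      liminf (fun n => birkhoffAverage ℝ T g n x) atTop :=
  liminf_eq_of_tendsto_sub_zero (abs_birkhoffAverage_le hC · x)
    (tendsto_birkhoffAverage_apply_sub_birkhoffAverage' ℝ
      (Metric.isBounded_iff_subset_closedBall 0 |>.mpr ⟨C, by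
        rintro _ ⟨y, rfl⟩; simpa using hC y⟩) T x)

lemma birkhoffSum_const_sub_pos {n : ℕ} {x : X} {t : ℝ} (hn : 0 < n)
    (h : birkhoffAverage ℝ T g n x < t) : 0 < birkhoffSum T (fun y => t - g y) n x := by
  have hn' : (0 : ℝ) < n := by exact_mod_cast hn
  rw [birkhoffAverage, smul_eq_mul, inv_mul_lt_iff₀ hn'] at h
  simp only [birkhoffSum, Finset.sum_sub_distrib, Finset.sum_const, Finset.card_range,
    nsmul_eq_mul] at h ⊢
  linarith

variable [MeasurableSpace X] {μ : Measure X}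

lemma measurable_birkhoffAverage (hT : Measurable T) (hg : Measurable g) (n : ℕ) :
    Measurable (birkhoffAverage ℝ T g n) :=
  have hsum : Measurable (birkhoffSum T g n) :=
    Finset.measurable_fun_sum (Finset.range n) fun k _ => hg.comp (hT.iterate k)
  hsum.const_smul (n : ℝ)⁻¹

theorem Ergodic.ae_integral_le_liminf_birkhoffAverage [IsProbabilityMeasure μ]
    (hT : Ergodic T μ) (hg : Measurable g) (hC : ∀ x, |g x| ≤ C) :
    ∀ᵐ x ∂μ, ∫ y, g y ∂μ ≤ liminf (fun n => birkhoffAverage ℝ T g n x) atTop := by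
  set ℓ : X → ℝ := fun x => liminf (fun n => birkhoffAverage ℝ T g n x) atTop
  have hℓ : Measurable ℓ := .liminf (measurable_birkhoffAverage hT.measurable hg)
  have hgi : Integrable g μ :=
    .of_bound hg.aestronglyMeasurable C (Eventually.of_forall fun x => by simpa using hC x)
  have hle : ∀ t < ∫ y, g y ∂μ, ∀ᵐ x ∂μ, t ≤ ℓ x := by
    intro t ht
    set L := {x | ℓ x < t}
    have hL : MeasurableSet L := measurableSet_lt hℓ measurable_const
    have hLT : T ⁻¹' L = L := by
      ext x
      simp only [L, ℓ, Set.mem_preimage, Set.mem_ofPred_eq, liminf_birkhoffAverage_apply hC]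
    refine (hT.measure_self_or_compl_eq_zero hL hLT).elim
      (fun h0 => (measure_eq_zero_iff_ae_notMem.mp h0).mono fun x hx => not_lt.mp hx)
      fun h1 => ?_
    have hpos : ∀ᵐ x ∂μ, ∃ n, 0 < birkhoffSum T (fun y => t - g y) n x := by
      filter_upwards [mem_ae_iff.mpr h1] with x hx
      have hcobdd : IsCoboundedUnder (· ≥ ·) atTop (fun n => birkhoffAverage ℝ T g n x) :=
        isBoundedUnder_of ⟨C, fun n => (abs_le.mp (abs_birkhoffAverage_le hC n x)).2⟩
          |>.isCoboundedUnder_ge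
      obtain ⟨n, hn, hlt⟩ := (frequently_lt_of_liminf_lt hcobdd hx).forall_exists_of_atTop 1
      exact ⟨n, birkhoffSum_const_sub_pos hn hlt⟩
    have := integral_nonneg_of_ae_exists_birkhoffSum_pos (f := fun y => t - g y)
      hT.toMeasurePreserving (measurable_const.sub hg) ((integrable_const t).sub hgi) hpos
    rw [integral_sub (integrable_const t) hgi, integral_const, probReal_univ, one_smul] at this
    exact absurd ht (not_lt.mpr (sub_nonneg.mp this))
  have hle_rat : ∀ᵐ x ∂μ, ∀ q : ℚ, (q : ℝ) < ∫ y, g y ∂μ → q ≤ ℓ x :=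
    ae_all_iff.mpr fun q => by
      by_cases hq : (q : ℝ) < ∫ y, g y ∂μ
      · exact (hle q hq).mono fun x hx _ => hx
      · exact Eventually.of_forall fun x hq' => absurd hq' hq
  exact hle_rat.mono fun x hx => le_of_forall_rat_lt_imp_le hx

end BirkhoffAverage

section Counting

open Finset

lemma card_filter_range_le_card_filter_Icc_add {P Q : ℕ → Prop} [DecidablePred P]
    [DecidablePred Q] {n₀ : ℕ} (h : ∀ n, n₀ ≤ n → Q n → P n) (N : ℕ) :
    #{n ∈ range N | Q n} ≤ #{n ∈ Icc 1 N | P n} + (n₀ + 1) := by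
  have hsub : {n ∈ range N | Q n} ⊆ {n ∈ Icc 1 N | P n} ∪ range (n₀ + 1) := by
    intro n hn
    simp only [mem_filter, mem_range, mem_union, mem_Icc] at hn ⊢
    by_cases hn₀ : n₀ < n
    · exact Or.inl ⟨⟨by omega, by omega⟩, h n hn₀.le hn.2⟩
    · exact Or.inr (by omega)
  simpa using (card_le_card hsub).trans (card_union_le _ _)

lemma card_filter_Icc_div_le_one (P : ℕ → Prop) [DecidablePred P] (N : ℕ) :
    (#{n ∈ Icc 1 N | P n} : ℝ) / N ≤ 1 :=
  div_le_one_of_le₀ (by exact_mod_cast (card_filter_le _ _).trans (Nat.card_Icc 1 N).le)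
    N.cast_nonneg

lemma birkhoffSum_indicator_one {X : Type*} (T : X → X) (s : Set X) [DecidablePred (· ∈ s)]
    (n : ℕ) (x : X) :
    birkhoffSum T (s.indicator (1 : X → ℝ)) n x = #{k ∈ range n | T^[k] x ∈ s} := by
  simp [birkhoffSum, Set.indicator_apply, sum_boole]

end Counting

section Density

open Finset

variable {X : Type*} [MeasurableSpace X] {μ : Measure X}

lemma exists_pos_lt_measureReal_of_tendsto {G : ℝ → Set X}
    (h : Tendsto (fun κ => μ (G κ)) (𝓝[>] 0) (𝓝 1)) {t : ℝ} (ht : t < 1) :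
    ∃ κ > 0, t < μ.real (G κ) := by
  have hreal : Tendsto (fun κ => μ.real (G κ)) (𝓝[>] 0) (𝓝 1) := by
    have := (ENNReal.tendsto_toReal ENNReal.one_ne_top).comp h
    rwa [ENNReal.toReal_one] at this
  obtain ⟨κ, hκ, hκpos⟩ :=
    ((hreal.eventually (lt_mem_nhds ht)).and self_mem_nhdsWithin).exists
  exact ⟨κ, hκpos, hκ⟩

theorem Ergodic.ae_eventually_lt_card_filter_Icc_div [IsProbabilityMeasure μ] {T : X → X}
    (hT : Ergodic T μ) {s : Set X} (hs : MeasurableSet s) {P : X → ℕ → Prop}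
    [∀ x, DecidablePred (P x)] (hP : ∀ x, ∀ᶠ n in atTop, T^[n] x ∈ s → P x n) :
    ∀ᵐ x ∂μ, ∀ t < μ.real s, ∀ᶠ N in atTop,
      t < (#{n ∈ Icc 1 N | P x n} : ℝ) / N := by
  classical
  have hC : ∀ x, |s.indicator (1 : X → ℝ) x| ≤ 1 := fun x => by
    by_cases hx : x ∈ s <;> simp [hx]
  filter_upwards [hT.ae_integral_le_liminf_birkhoffAverage (g := s.indicator 1)
    (measurable_const.indicator hs) hC] with x hx t ht
  rw [integral_indicator_one hs] at hx
  obtain ⟨n₀, hn₀⟩ := eventually_atTop.mp (hP x)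
  obtain ⟨t', htt', ht's⟩ := exists_between ht
  have havg : ∀ᶠ N in atTop, t' < birkhoffAverage ℝ T (s.indicator 1) N x :=
    eventually_lt_of_lt_liminf (ht's.trans_le hx)
      (isBoundedUnder_of ⟨-1, fun N => (abs_le.mp (abs_birkhoffAverage_le hC N x)).1⟩)
  have herr : ∀ᶠ N : ℕ in atTop, ((n₀ + 1 : ℕ) : ℝ) / N < t' - t :=
    (tendsto_const_div_atTop_nhds_zero_nat _).eventually (gt_mem_nhds (sub_pos.mpr htt'))
  filter_upwards [havg, herr, eventually_gt_atTop 0] with N havg herr hN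
  have hcount : birkhoffSum T (s.indicator 1) N x ≤
      (#{n ∈ Icc 1 N | P x n} : ℝ) + ((n₀ + 1 : ℕ) : ℝ) := by
    rw [birkhoffSum_indicator_one]
    exact_mod_cast card_filter_range_le_card_filter_Icc_add (fun n hn => hn₀ n hn) N
  have hN' : (0 : ℝ) < N := by exact_mod_cast hN
  rw [birkhoffAverage, smul_eq_mul, inv_mul_eq_div] at havg
  calc t < birkhoffSum T (s.indicator 1) N x / N - ((n₀ + 1 : ℕ) : ℝ) / N := by linarith
    _ ≤ _ := by rw [← sub_div]; gcongr; linarith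

end Density

open Classical in
theorem stmt9_general {X : Type*} [MeasurableSpace X] (ν : Measure X) [IsProbabilityMeasure ν]
    (T : X → X) (herg : Ergodic T ν)
    (d : X → ℕ → ℝ)
    (G : ℝ → ℝ → Set X) (hGmeas : ∀ κ ε, MeasurableSet (G κ ε))
    (hG : ∀ ε > (0 : ℝ), Tendsto (fun κ => ν (G κ ε)) (𝓝[>] 0) (𝓝 1))
    (r : X → ℕ → ℝ)
    (hr : ∀ x, Tendsto (fun n => r x n) atTop (𝓝 0))
    (hkey : ∀ κ > (0 : ℝ), ∀ ε > (0 : ℝ), ∀ (x : X) (n : ℕ),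
      r x n < κ → T^[n] x ∈ G κ ε → |d x n - 1| < ε) :
    ∀ᵐ x ∂ν, ∀ ε > (0 : ℝ),
      Tendsto
        (fun N : ℕ =>
          (((Finset.Icc 1 N).filter fun n => |d x n - 1| < ε).card : ℝ) / (N : ℝ))
        atTop (𝓝 1) := by
  have hε : ∀ k : ℕ, (0 : ℝ) < 1 / (k + 1) := fun k => Nat.one_div_pos_of_nat
  have hκ : ∀ k j : ℕ, ∃ κ > 0, 1 - 1 / ((j : ℝ) + 1) < ν.real (G κ (1 / (k + 1))) :=
    fun k j => exists_pos_lt_measureReal_of_tendsto (hG _ (hε k)) (by linarith [hε j])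
  choose κ hκpos hκG using hκ
  have hdense : ∀ᵐ x ∂ν, ∀ k j : ℕ, ∀ᶠ N in atTop, 1 - 1 / ((j : ℝ) + 1) <
      (((Finset.Icc 1 N).filter fun n => |d x n - 1| < 1 / (k + 1)).card : ℝ) / N := by
    refine ae_all_iff.mpr fun k => ae_all_iff.mpr fun j => ?_
    have hP : ∀ x, ∀ᶠ n in atTop,
        T^[n] x ∈ G (κ k j) (1 / (k + 1)) → |d x n - 1| < 1 / (k + 1) :=
      fun x => ((hr x).eventually (gt_mem_nhds (hκpos k j))).mono fun n hn =>
        hkey _ (hκpos k j) _ (hε k) x n hn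
    filter_upwards [herg.ae_eventually_lt_card_filter_Icc_div (hGmeas _ _) hP] with x hx
    exact hx _ (hκG k j)
  filter_upwards [hdense] with x hx ε hε_pos
  refine tendsto_order.mpr ⟨fun b hb => ?_, fun b hb =>
    Eventually.of_forall fun N => (card_filter_Icc_div_le_one _ N).trans_lt hb⟩
  obtain ⟨k, hk⟩ := exists_nat_one_div_lt hε_pos
  obtain ⟨j, hj⟩ := exists_nat_one_div_lt (sub_pos.mpr hb)
  filter_upwards [hx k j] with N hN
  calc b < 1 - 1 / ((j : ℝ) + 1) := by linarith
    _ < _ := hN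
    _ ≤ _ := by gcongr

open Classical in
/-- The density-one argument: in an ergodic system, if `|d(x,n) - 1| < ε` holds whenever
`r(x,n) < κ` and `Tⁿx ∈ G_{κ,ε}`, where `r(x,n) → 0` and `ν(G_{κ,ε}) → 1` as `κ → 0`,
then for `ν`-a.e. `x` and every `ε > 0` the set `{n : |d(x,n) - 1| < ε}` has natural
density one. -/
theorem stmt9 {X : Type*} [MeasurableSpace X] (ν : Measure X) [IsProbabilityMeasure ν]
    (T : X → X) (herg : Ergodic T ν)
    (d : X → ℕ → ℝ) (hd : ∀ n, Measurable fun x => d x n)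
    (G : ℝ → ℝ → Set X) (hGmeas : ∀ κ ε, MeasurableSet (G κ ε))
    (hG : ∀ ε > (0 : ℝ), Tendsto (fun κ => ν (G κ ε)) (𝓝[>] 0) (𝓝 1))
    (r : X → ℕ → ℝ) (hrpos : ∀ x n, 0 < r x n)
    (hr : ∀ x, Tendsto (fun n => r x n) atTop (𝓝 0))
    (hkey : ∀ κ > (0 : ℝ), ∀ ε > (0 : ℝ), ∀ (x : X) (n : ℕ),
      r x n < κ → T^[n] x ∈ G κ ε → |d x n - 1| < ε) :
    ∀ᵐ x ∂ν, ∀ ε > (0 : ℝ),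
      Tendsto
        (fun N : ℕ =>
          (((Finset.Icc 1 N).filter fun n => |d x n - 1| < ε).card : ℝ) / (N : ℝ))
        atTop (𝓝 1) :=
  stmt9_general ν T herg d G hGmeas hG r hr hkey
end
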